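/- A vector polynomial in [P_n(ℝ³)]³ has zero divergence if and only if it is the curl of a vector polynomial of degree at most n+1. In particular, the space of divergence-free vector polynomials of degree at most k-3 equals curl([P_{k-2}(ℝ³)]³) and also equals curl(x ∧ [P_{k-3}(ℝ³)]³). -/

import Mathlib

open MvPolynomial

noncomputable section

abbrev Poly3 := MvPolynomial (Fin 3) ℝ

/-- `p ∈ P_m(ℝ³)` (total degree at most `m`, with `P_m = {0}` for `m < 0`). -/
def degLE (m : ℤ) (p : Poly3) : Prop := p = 0 ∨ (p.totalDegree : ℤ) ≤ m

/-- Curl of a vector polynomial. -/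
def pcurl (v : Fin 3 → Poly3) : Fin 3 → Poly3 :=
  ![pderiv 1 (v 2) - pderiv 2 (v 1),
    pderiv 2 (v 0) - pderiv 0 (v 2),
    pderiv 0 (v 1) - pderiv 1 (v 0)]

/-- Divergence of a vector polynomial. -/
def pdiv (v : Fin 3 → Poly3) : Poly3 := ∑ i, pderiv i (v i)

/-- Cross product `x ∧ p` of the position vector with a vector polynomial. -/
def xcross (p : Fin 3 → Poly3) : Fin 3 → Poly3 :=
  ![X 1 * p 2 - X 2 * p 1,
    X 2 * p 0 - X 0 * p 2,
    X 0 * p 1 - X 1 * p 0]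

/-!
The Koszul homotopy identity `curl (x ∧ r) = x div r - (E + 2) r`, with `E = ∑ⱼ xⱼ ∂ⱼ` the Euler
operator, does all the work. The operator `T₂` dividing each monomial of degree `d` by `d + 2`
inverts `E + 2` and satisfies `∂ᵢ T₂ = T₃ ∂ᵢ`, so for divergence-free `v` the field `r = -T₂ v`
is again divergence-free, has the degree of `v`, and `curl (x ∧ r) = v`.
-/

namespace MvPolynomial

theorem pderiv_comm {σ R : Type*} [CommSemiring R] (i j : σ) (p : MvPolynomial σ R) :
    pderiv i (pderiv j p) = pderiv j (pderiv i p) := by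
  classical
  ext m
  simp only [coeff_pderiv]
  rcases eq_or_ne i j with rfl | hij
  · rfl
  · rw [add_right_comm m]
    simp only [Finsupp.add_apply, Finsupp.single_eq_of_ne hij, Finsupp.single_eq_of_ne hij.symm,
      add_zero]
    ring

theorem coeff_sum_X_mul_pderiv {σ R : Type*} [Fintype σ] [CommSemiring R]
    (p : MvPolynomial σ R) (d : σ →₀ ℕ) :
    coeff d (∑ i, X i * pderiv i p) = d.degree * coeff d p := by
  classical
  induction p using MvPolynomial.induction_on' with
  | add p q hp hq => simp only [map_add, mul_add, Finset.sum_add_distrib, coeff_add, hp, hq]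
  | monomial m r =>
    simp only [X_mul_pderiv_monomial, coeff_sum, coeff_smul, coeff_monomial,
      Finsupp.degree_eq_sum]
    split_ifs with h
    · subst h; simp [Finset.sum_mul]
    · simp

variable {σ K : Type*} [Field K]

/-- The operator `T_a` of the homotopy argument: for `a ≠ 0` it inverts `E + a`. -/
def degreeScale (a : ℕ) : MvPolynomial σ K →ₗ[K] MvPolynomial σ K :=
  Finsupp.lsum K (fun m : σ →₀ ℕ => (m.degree + a : K)⁻¹ • monomial m) ∘ₗ
    (AddMonoidAlgebra.coeffLinearEquiv K).toLinearMap

theorem degreeScale_monomial (a : ℕ) (m : σ →₀ ℕ) (c : K) :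
    degreeScale a (monomial m c) = monomial m (c / (m.degree + a)) := by
  simp [degreeScale, div_eq_inv_mul, smul_monomial]

theorem coeff_degreeScale (a : ℕ) (p : MvPolynomial σ K) (d : σ →₀ ℕ) :
    coeff d (degreeScale a p) = coeff d p / (d.degree + a) := by
  classical
  induction p using MvPolynomial.induction_on' with
  | add p q hp hq => simp only [map_add, coeff_add, hp, hq, add_div]
  | monomial m c =>
    rw [degreeScale_monomial, coeff_monomial, coeff_monomial]
    split_ifs with h
    · rw [h]
    · rw [zero_div]

theorem support_degreeScale_subset (a : ℕ) (p : MvPolynomial σ K) :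
    (degreeScale a p).support ⊆ p.support := by
  intro d hd
  rw [mem_support_iff, coeff_degreeScale] at hd
  exact mem_support_iff.2 fun h => hd (by rw [h, zero_div])

theorem pderiv_degreeScale (a : ℕ) (i : σ) (p : MvPolynomial σ K) :
    pderiv i (degreeScale a p) = degreeScale (a + 1) (pderiv i p) := by
  ext d
  rw [coeff_pderiv, coeff_degreeScale, coeff_degreeScale, coeff_pderiv, map_add,
    Finsupp.degree_single]
  push_cast
  ring

theorem sum_X_mul_pderiv_degreeScale_add [Fintype σ] [CharZero K] {a : ℕ} (ha : a ≠ 0)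
    (p : MvPolynomial σ K) :
    ∑ i, X i * pderiv i (degreeScale a p) + a • degreeScale a p = p := by
  ext d
  have hd : (d.degree + a : K) ≠ 0 := by exact_mod_cast (Nat.add_pos_right _ ha.bot_lt).ne'
  rw [coeff_add, coeff_sum_X_mul_pderiv, coeff_smul, coeff_degreeScale, nsmul_eq_mul]
  field_simp

end MvPolynomial

theorem degLE_iff_forall_mem_support {m : ℤ} {p : Poly3} :
    degLE m p ↔ ∀ d ∈ p.support, (d.degree : ℤ) ≤ m := by
  constructor
  · rintro (rfl | hp) d hd
    · simp at hd
    · exact (Int.ofNat_le.2 (le_totalDegree hd)).trans hp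
  · intro h
    rcases p.support.eq_empty_or_nonempty with hp | hp
    · exact Or.inl (support_eq_empty.1 hp)
    · obtain ⟨d, hd, hdeg⟩ := Finset.exists_mem_eq_sup _ hp Finsupp.degree
      refine Or.inr ?_
      change ((p.support.sup fun d => d.degree : ℕ) : ℤ) ≤ m
      exact hdeg ▸ h d hd

theorem degLE_of_support_subset {m : ℤ} {p q : Poly3} (hpq : p.support ⊆ q.support)
    (hq : degLE m q) : degLE m p := by
  rw [degLE_iff_forall_mem_support] at hq ⊢
  exact fun d hd => hq d (hpq hd)

theorem degLE.neg {m : ℤ} {p : Poly3} (hp : degLE m p) : degLE m (-p) :=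
  degLE_of_support_subset (by rw [support_neg]) hp

theorem degLE.sub {m : ℤ} {p q : Poly3} (hp : degLE m p) (hq : degLE m q) :
    degLE m (p - q) := by
  classical
  rw [degLE_iff_forall_mem_support] at hp hq ⊢
  intro d hd
  rcases Finset.mem_union.1 (support_sub _ p q hd) with h | h
  exacts [hp d h, hq d h]

theorem degLE.X_mul {m : ℤ} {p : Poly3} (hp : degLE m p) (j : Fin 3) :
    degLE (m + 1) (X j * p) := by
  rw [degLE_iff_forall_mem_support] at hp ⊢
  intro d hd
  rw [support_X_mul] at hd
  obtain ⟨d', hd', rfl⟩ := Finset.mem_map.1 hd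
  simp only [addLeftEmbedding_apply, map_add, Finsupp.degree_single]
  push_cast
  linarith [hp d' hd']

theorem degLE.pderiv {m : ℤ} {p : Poly3} (hp : degLE m p) (i : Fin 3) :
    degLE (m - 1) (pderiv i p) := by
  rw [degLE_iff_forall_mem_support] at hp ⊢
  intro d hd
  rw [mem_support_iff, coeff_pderiv] at hd
  have := hp _ (mem_support_iff.2 (left_ne_zero_of_mul hd))
  rw [map_add, Finsupp.degree_single] at this
  push_cast at this
  linarith

theorem degLE.degreeScale {m : ℤ} {p : Poly3} (hp : degLE m p) (a : ℕ) :
    degLE m (degreeScale a p) :=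
  degLE_of_support_subset (support_degreeScale_subset a p) hp

theorem degLE_xcross {m : ℤ} {r : Fin 3 → Poly3} (hr : ∀ i, degLE m (r i)) (i : Fin 3) :
    degLE (m + 1) (xcross r i) := by
  fin_cases i <;> exact ((hr _).X_mul _).sub ((hr _).X_mul _)

theorem degLE_pcurl {m : ℤ} {w : Fin 3 → Poly3} (hw : ∀ i, degLE m (w i)) (i : Fin 3) :
    degLE (m - 1) (pcurl w i) := by
  fin_cases i <;> exact ((hw _).pderiv _).sub ((hw _).pderiv _)

theorem pdiv_pcurl (w : Fin 3 → Poly3) : pdiv (pcurl w) = 0 := by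
  simp only [pdiv, pcurl, Fin.sum_univ_three, Matrix.cons_val_zero, Matrix.cons_val_one,
    Matrix.cons_val_two, Matrix.head_cons, Matrix.tail_cons, map_sub]
  rw [pderiv_comm 0 1, pderiv_comm 0 2, pderiv_comm 1 2]
  ring

theorem pcurl_xcross (r : Fin 3 → Poly3) (i : Fin 3) :
    pcurl (xcross r) i = X i * pdiv r - (∑ j, X j * pderiv j (r i) + 2 • r i) := by
  fin_cases i <;>
  · simp [pcurl, xcross, pdiv, Fin.sum_univ_three, pderiv_X]
    ring

theorem pdiv_neg_degreeScale (a : ℕ) (v : Fin 3 → Poly3) :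
    pdiv (fun i => -degreeScale a (v i)) = -degreeScale (a + 1) (pdiv v) := by
  simp only [pdiv, map_neg, pderiv_degreeScale, map_sum, Finset.sum_neg_distrib]

theorem eq_pcurl_xcross_of_pdiv_eq_zero {v : Fin 3 → Poly3} (hv : pdiv v = 0) :
    v = pcurl (xcross fun i => -degreeScale 2 (v i)) := by
  funext i
  rw [pcurl_xcross, pdiv_neg_degreeScale, hv, map_zero, neg_zero, mul_zero, zero_sub]
  simp only [map_neg, mul_neg, Finset.sum_neg_distrib, smul_neg, ← neg_add, neg_neg]
  exact (sum_X_mul_pderiv_degreeScale_add two_ne_zero (v i)).symm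

theorem pdiv_eq_zero_iff_exists_pcurl_xcross {m : ℤ} {v : Fin 3 → Poly3}
    (hv : ∀ i, degLE m (v i)) :
    pdiv v = 0 ↔ ∃ r : Fin 3 → Poly3, (∀ i, degLE m (r i)) ∧ v = pcurl (xcross r) := by
  refine ⟨fun h => ?_, ?_⟩
  · exact ⟨_, fun i => ((hv i).degreeScale 2).neg, eq_pcurl_xcross_of_pdiv_eq_zero h⟩
  · rintro ⟨r, -, rfl⟩
    exact pdiv_pcurl _

theorem pdiv_eq_zero_iff_exists_pcurl {m : ℤ} {v : Fin 3 → Poly3} (hv : ∀ i, degLE m (v i)) :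
    pdiv v = 0 ↔ ∃ w : Fin 3 → Poly3, (∀ i, degLE (m + 1) (w i)) ∧ v = pcurl w := by
  refine ⟨fun h => ?_, ?_⟩
  · obtain ⟨r, hr, rfl⟩ := (pdiv_eq_zero_iff_exists_pcurl_xcross hv).1 h
    exact ⟨xcross r, degLE_xcross hr, rfl⟩
  · rintro ⟨w, -, rfl⟩
    exact pdiv_pcurl w

theorem setOf_pdiv_eq_zero_eq_pcurl (m : ℤ) :
    {u : Fin 3 → Poly3 | (∀ i, degLE m (u i)) ∧ pdiv u = 0}
      = {u | ∃ w : Fin 3 → Poly3, (∀ i, degLE (m + 1) (w i)) ∧ u = pcurl w} := by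
  ext u
  refine ⟨fun ⟨hu, h⟩ => (pdiv_eq_zero_iff_exists_pcurl hu).1 h, ?_⟩
  rintro ⟨w, hw, rfl⟩
  exact ⟨fun i => add_sub_cancel_right m 1 ▸ degLE_pcurl hw i, pdiv_pcurl w⟩

theorem setOf_pdiv_eq_zero_eq_pcurl_xcross (m : ℤ) :
    {u : Fin 3 → Poly3 | (∀ i, degLE m (u i)) ∧ pdiv u = 0}
      = {u | ∃ r : Fin 3 → Poly3, (∀ i, degLE m (r i)) ∧ u = pcurl (xcross r)} := by
  ext u
  refine ⟨fun ⟨hu, h⟩ => (pdiv_eq_zero_iff_exists_pcurl_xcross hu).1 h, ?_⟩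
  rintro ⟨r, hr, rfl⟩
  exact ⟨fun i => add_sub_cancel_right m 1 ▸ degLE_pcurl (degLE_xcross hr) i, pdiv_pcurl _⟩

theorem pdiv_eq_zero_iff_curl_general (n k : ℕ) (v : Fin 3 → Poly3)
    (hv : ∀ i, degLE (n : ℤ) (v i)) :
    (pdiv v = 0 ↔ ∃ w : Fin 3 → Poly3, (∀ i, degLE ((n : ℤ) + 1) (w i)) ∧ v = pcurl w) ∧
    {u : Fin 3 → Poly3 | (∀ i, degLE ((k : ℤ) - 3) (u i)) ∧ pdiv u = 0}
      = {u : Fin 3 → Poly3 |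
          ∃ w : Fin 3 → Poly3, (∀ i, degLE ((k : ℤ) - 2) (w i)) ∧ u = pcurl w} ∧
    {u : Fin 3 → Poly3 | (∀ i, degLE ((k : ℤ) - 3) (u i)) ∧ pdiv u = 0}
      = {u : Fin 3 → Poly3 |
          ∃ r : Fin 3 → Poly3, (∀ i, degLE ((k : ℤ) - 3) (r i)) ∧ u = pcurl (xcross r)} := by
  refine ⟨pdiv_eq_zero_iff_exists_pcurl hv, ?_, setOf_pdiv_eq_zero_eq_pcurl_xcross _⟩
  rw [show (k : ℤ) - 2 = k - 3 + 1 by ring]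
  exact setOf_pdiv_eq_zero_eq_pcurl _

/-- A vector polynomial in `[P_n(ℝ³)]³` is divergence-free iff it is the curl of a
vector polynomial of degree at most `n+1`.  In particular, for `k ≥ 2` the space of
divergence-free vector polynomials of degree at most `k-3` equals
`curl([P_{k-2}]³)`, which also equals `curl(x ∧ [P_{k-3}]³)`. -/
theorem pdiv_eq_zero_iff_curl (n k : ℕ) (hk : 2 ≤ k) (v : Fin 3 → Poly3)
    (hv : ∀ i, degLE (n : ℤ) (v i)) :
    (pdiv v = 0 ↔ ∃ w : Fin 3 → Poly3, (∀ i, degLE ((n : ℤ) + 1) (w i)) ∧ v = pcurl w) ∧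
    {u : Fin 3 → Poly3 | (∀ i, degLE ((k : ℤ) - 3) (u i)) ∧ pdiv u = 0}
      = {u : Fin 3 → Poly3 |
          ∃ w : Fin 3 → Poly3, (∀ i, degLE ((k : ℤ) - 2) (w i)) ∧ u = pcurl w} ∧
    {u : Fin 3 → Poly3 | (∀ i, degLE ((k : ℤ) - 3) (u i)) ∧ pdiv u = 0}
      = {u : Fin 3 → Poly3 |
          ∃ r : Fin 3 → Poly3, (∀ i, degLE ((k : ℤ) - 3) (r i)) ∧ u = pcurl (xcross r)} :=
  pdiv_eq_zero_iff_curl_general n k v hv
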